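/- The map α ↦ 1 + dα is a group homomorphism from odd forms modulo exact forms with the modified addition ⊕ to the multiplicative group of even forms with degree-zero component 1. -/

import Mathlib

/-!  Abstract model of complex differential forms on a smooth manifold `M`:
`E` plays the role of the even-degree forms (a commutative ring under wedge),
`O` the odd-degree forms (an `E`-module, the action being the wedge product
of an even by an odd form), and `d : O →+ E` the exterior derivative from odd
to even forms.  `α ∧ dβ` is written `d β • α`. -/

variable {E O : Type*} [CommRing E] [AddCommGroup O] [Module E O]

/-- The modified addition `α ⊕ β := α + β + α ∧ dβ` on odd-degree forms. -/
def mAdd (d : O →+ E) (α β : O) : O := α + β + d β • α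

theorem one_add_map_mAdd_eq_mul (d : O →+ E) (hLeib : ∀ x y : O, d (d y • x) = d x * d y)
    (α β : O) : 1 + d (mAdd d α β) = (1 + d α) * (1 + d β) := by
  simp only [mAdd, map_add, hLeib]
  ring

/-- Here `Λ = Ω^odd/dΩ^even` is `O ⧸ δ.range`, with `δ : E →+ O` the exterior derivative
on even forms; the values `1 + dα` are unipotent, hence units of `E`. -/
theorem one_add_d_hom (d : O →+ E) (δ : E →+ O)
    (hδ : ∀ e : E, d (δ e) = 0)
    (hLeib : ∀ x y : O, d (d y • x) = d x * d y)
    (hnil : ∀ x : O, IsNilpotent (d x)) :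
    ∃ f : O ⧸ δ.range → E,
      (∀ α : O, f (QuotientAddGroup.mk α) = 1 + d α) ∧
      (∀ α β : O, f (QuotientAddGroup.mk (mAdd d α β)) =
        f (QuotientAddGroup.mk α) * f (QuotientAddGroup.mk β)) ∧
      (∀ α : O, IsUnit (f (QuotientAddGroup.mk α))) := by
  have exact_le_ker : δ.range ≤ d.ker := by
    rintro _ ⟨e, rfl⟩
    exact hδ e
  let dLambda : O ⧸ δ.range →+ E := QuotientAddGroup.lift δ.range d exact_le_ker
  exact ⟨fun q => 1 + dLambda q, fun _ => rfl, one_add_map_mAdd_eq_mul d hLeib,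
    fun α => (hnil α).isUnit_one_add⟩
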